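/- Let ι be a nonempty index set, let X be a finite-dimensional subspace of ℓ∞(ι, ℝ) (the space of bounded real-valued functions on ι with the supremum norm), and let P : ℓ∞(ι, ℝ) → X be a continuous linear projection onto X. Then the closure of P(B), where B is the closed unit ball of ℓ∞(ι, ℝ), is a sufficient enlargement for X. -/

import Mathlib

open Metric
open scoped ENNReal

noncomputable section

universe u

/-- A bounded, closed, convex, symmetric subset `A` of a finite-dimensional normed
space `X` is a sufficient enlargement for `X` if for every Banach space `Y` and every
linear isometric embedding `i : X → Y` there is a continuous linear projection of `Y`
onto `i(X)` mapping the closed unit ball of `Y` into `i(A)`. -/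
def IsSufficientEnlargement {X : Type*} [NormedAddCommGroup X] [NormedSpace ℝ X]
    [FiniteDimensional ℝ X] (A : Set X) : Prop :=
  Bornology.IsBounded A ∧ IsClosed A ∧ Convex ℝ A ∧ A = -A ∧
  ∀ (Y : Type u) [NormedAddCommGroup Y] [NormedSpace ℝ Y] [CompleteSpace Y]
    (i : X →ₗᵢ[ℝ] Y),
    ∃ P : Y →L[ℝ] Y,
      (∀ x : X, P (i x) = i x) ∧
      LinearMap.range P.toLinearMap = LinearMap.range i.toLinearMap ∧
      P '' closedBall 0 1 ⊆ i '' A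

open scoped NNReal

/-! `ℓ∞(ι)` is an injective Banach space: an operator `f` into it from a subspace of any normed
space extends to the whole space without increasing its norm, by extending each coordinate
functional of `f` with the Hahn–Banach theorem. Given an isometric embedding `i : X → Y`,
extend the inclusion `X ⊆ ℓ∞(ι)` through `i` to a contraction `T : Y → ℓ∞(ι)`; then
`i ∘ P ∘ T` is a projection of `Y` onto `i(X)` mapping the unit ball of `Y` into
`i(P(B_{ℓ∞}))`. -/

theorem lp.norm_evalCLM_le {𝕜 ι : Type*} [NontriviallyNormedField 𝕜] {E : ι → Type*}
    [∀ k, NormedAddCommGroup (E k)] [∀ k, NormedSpace 𝕜 (E k)] {p : ℝ≥0∞} [Fact (1 ≤ p)]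
    (k : ι) : ‖lp.evalCLM 𝕜 E p k‖ ≤ 1 :=
  LinearMap.mkContinuous_norm_le _ zero_le_one _

namespace ContinuousLinearMap

variable {𝕜 F ι : Type*} [NontriviallyNormedField 𝕜] [NormedAddCommGroup F] [NormedSpace 𝕜 F]
  {E : ι → Type*} [∀ k, NormedAddCommGroup (E k)] [∀ k, NormedSpace 𝕜 (E k)]

def toLpInfty (g : ∀ k, F →L[𝕜] E k) (C : ℝ≥0) (hg : ∀ k, ‖g k‖ ≤ C) : F →L[𝕜] lp E ∞ :=
  LinearMap.mkContinuous
    { toFun y := ⟨fun k => g k y, memℓp_infty ⟨C * ‖y‖, by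
        rintro _ ⟨k, rfl⟩; exact (g k).le_of_opNorm_le (hg k) y⟩⟩
      map_add' _ _ := lp.ext <| funext fun k => map_add (g k) _ _
      map_smul' _ _ := lp.ext <| funext fun k => map_smul (g k) _ _ }
    C fun y => lp.norm_le_of_forall_le (by positivity) fun k => (g k).le_of_opNorm_le (hg k) y

theorem norm_toLpInfty_le (g : ∀ k, F →L[𝕜] E k) (C : ℝ≥0) (hg : ∀ k, ‖g k‖ ≤ C) :
    ‖toLpInfty g C hg‖ ≤ C :=
  LinearMap.mkContinuous_norm_le _ C.2 _

end ContinuousLinearMap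

namespace LinearIsometry

variable {𝕜 E F : Type*} [RCLike 𝕜] [NormedAddCommGroup E] [NormedSpace 𝕜 E]
  [NormedAddCommGroup F] [NormedSpace 𝕜 F]

theorem exists_extension_norm_eq (i : E →ₗᵢ[𝕜] F) (f : StrongDual 𝕜 E) :
    ∃ g : StrongDual 𝕜 F, g.comp i.toContinuousLinearMap = f ∧ ‖g‖ = ‖f‖ := by
  obtain ⟨g, hg, hnorm⟩ := _root_.exists_extension_norm_eq _
    (f.comp (i.equivRange.symm : LinearMap.range i.toLinearMap →L[𝕜] E))
  refine ⟨g, ?_, by rwa [ContinuousLinearMap.opNorm_comp_linearIsometryEquiv] at hnorm⟩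
  ext x
  simpa using hg (i.equivRange x)

theorem exists_extension_lpInfty {ι : Type*} (i : E →ₗᵢ[𝕜] F)
    (f : E →L[𝕜] lp (fun _ : ι => 𝕜) ∞) :
    ∃ T : F →L[𝕜] lp (fun _ : ι => 𝕜) ∞, T.comp i.toContinuousLinearMap = f ∧ ‖T‖ ≤ ‖f‖ := by
  have hcoord : ∀ k, ‖(lp.evalCLM 𝕜 (fun _ : ι => 𝕜) ∞ k).comp f‖ ≤ ‖f‖ := fun k =>
    (ContinuousLinearMap.opNorm_comp_le _ _).trans <|
      mul_le_of_le_one_left (norm_nonneg f) (lp.norm_evalCLM_le k)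
  choose g hgi hgnorm using fun k => i.exists_extension_norm_eq ((lp.evalCLM 𝕜 _ ∞ k).comp f)
  refine ⟨.toLpInfty g ‖f‖₊ fun k => (hgnorm k).trans_le (hcoord k),
    ?_, ContinuousLinearMap.norm_toLpInfty_le _ _ _⟩
  ext x k
  exact congrArg (· x) (hgi k)

end LinearIsometry

theorem closure_image_closedBall_zero_eq_neg {E F 𝓕 : Type*} [SeminormedAddCommGroup E]
    [SeminormedAddCommGroup F] [FunLike 𝓕 E F] [AddMonoidHomClass 𝓕 E F] (f : 𝓕) (r : ℝ) :
    closure (f '' closedBall 0 r) = -closure (f '' closedBall 0 r) := by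
  rw [neg_closure, ← Set.image_neg_eq_neg, Set.image_image]
  simp_rw [← map_neg f]
  rw [← Set.image_image f Neg.neg, Set.image_neg_eq_neg, neg_closedBall, neg_zero]

theorem closure_image_ball_sufficientEnlargement_general
    (ι : Type*)
    (X : Submodule ℝ (lp (fun _ : ι => ℝ) ∞)) [FiniteDimensional ℝ X]
    (P : (lp (fun _ : ι => ℝ) ∞) →L[ℝ] X)
    (hP : ∀ x : X, P (x : lp (fun _ : ι => ℝ) ∞) = x) :
    IsSufficientEnlargement (closure (P '' closedBall 0 1)) := by
  refine ⟨(P.lipschitz.isBounded_image isBounded_closedBall).closure, isClosed_closure,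
    ((convex_closedBall _ _).linear_image P.toLinearMap).closure,
    closure_image_closedBall_zero_eq_neg P 1, fun Y _ _ _ i => ?_⟩
  obtain ⟨T, hTi, hT⟩ := i.exists_extension_lpInfty X.subtypeL
  have hPT : ∀ x : X, P (T (i x)) = x := fun x => by
    rw [show T (i x) = x from DFunLike.congr_fun hTi x, hP]
  refine ⟨i.toContinuousLinearMap ∘L P ∘L T, fun x => by simp [hPT], ?_, ?_⟩
  · refine le_antisymm (fun y ⟨w, hw⟩ => ⟨P (T w), hw⟩) fun y ⟨x, hx⟩ => ⟨i x, ?_⟩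
    simp [hPT, ← hx]
  · rintro _ ⟨y, hy, rfl⟩
    refine ⟨P (T y), subset_closure ⟨T y, ?_, rfl⟩, rfl⟩
    rw [mem_closedBall_zero_iff] at hy ⊢
    exact (T.le_opNorm y).trans
      (mul_le_one₀ (hT.trans (Submodule.norm_subtypeL_le X)) (norm_nonneg y) hy)

/-- If `X` is a finite-dimensional subspace of `ℓ∞(ι, ℝ)` and `P` is a continuous
linear projection of `ℓ∞(ι, ℝ)` onto `X`, then the closure of the image of the closed
unit ball of `ℓ∞(ι, ℝ)` under `P` is a sufficient enlargement for `X`. -/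
theorem closure_image_ball_sufficientEnlargement
    (ι : Type*) [Nonempty ι]
    (X : Submodule ℝ (lp (fun _ : ι => ℝ) ∞)) [FiniteDimensional ℝ X]
    (P : (lp (fun _ : ι => ℝ) ∞) →L[ℝ] X)
    (hP : ∀ x : X, P (x : lp (fun _ : ι => ℝ) ∞) = x) :
    IsSufficientEnlargement (closure (P '' closedBall 0 1)) :=
  closure_image_ball_sufficientEnlargement_general ι X P hP

end
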